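/- arXiv:2112.05927 — 5 statements merged into one kernel-verified Lean document; each statement's English description precedes it below -/
import Mathlib

section
/- Fix a ∈ ℝ^n with all entries a_i nonzero, and define f(x) = Σ_{i=1}^n x_i^2 (x_i − a_i)^2 + Σ_{1 ≤ i < j ≤ n} x_i^2 x_j^2. Then f has no spurious minimizers: every local minimizer z of f satisfies f(z) = 0, i.e., z ∈ {0, a_1 e_1, ..., a_n e_n}. -/
/-!
Restricted to any line through a local minimizer, `f` is a quartic polynomial whose linear
coefficient vanishes and whose quadratic coefficient is nonnegative. If two coordinates `z k`,
`z l` were nonzero, restricting `f` to the `(k, l)`-plane leaves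
`x²(x - a k)² + y²(y - a l)² + x²y² + K(x² + y²)` with `K ≥ 0`; the first-order conditions along
the two axes then force a negative second derivative along the rotation direction `(z l, -z k)`.
So a local minimizer has at most one nonzero coordinate `s`, and on that axis `f` is
`s²(s - a k)²`, whose only nonzero local minimizer is `a k`.
-/

open Finset Filter Topology

lemma two_mul_sum_sum_Ioi_mul {ι R : Type*} [LinearOrder ι] [Fintype ι]
    [LocallyFiniteOrderTop ι] [LocallyFiniteOrderBot ι] [CommRing R] (y : ι → R) :
    2 * ∑ i, ∑ j ∈ Ioi i, y i * y j = (∑ i, y i) ^ 2 - ∑ i, y i ^ 2 := by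
  classical
  have hpairs := sum_sum_Ioi_add_eq_sum_sum_off_diag fun j i => y j * y i
  have hcompl (i : ι) : ∑ j ∈ {i}ᶜ, y j * y i = (∑ j, y j) * y i - y i ^ 2 := by
    rw [← sum_compl_add_sum {i}, sum_singleton, add_mul, ← sum_mul]; ring
  simp only [hcompl, sum_sub_distrib, ← mul_sum] at hpairs
  rw [mul_sum, sq, ← hpairs]
  refine sum_congr rfl fun i _ => ?_
  rw [mul_sum]
  exact sum_congr rfl fun j _ => by ring

lemma IsLocalMin.comp_add_smul {E : Type*} [TopologicalSpace E] [AddCommGroup E] [Module ℝ E]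
    [ContinuousAdd E] [ContinuousSMul ℝ E] {h : E → ℝ} {p : E} (hp : IsLocalMin h p) (d : E) :
    IsLocalMin (fun t : ℝ => h (p + t • d)) 0 := by
  refine IsLocalMin.comp_continuous (g := fun t : ℝ => p + t • d) ?_ (by fun_prop)
  simpa using hp

lemma quartic_coeffs_of_isLocalMin {g : ℝ → ℝ} {c₀ c₁ c₂ c₃ c₄ : ℝ}
    (hg : ∀ t, g t = c₀ + c₁ * t + c₂ * t ^ 2 + c₃ * t ^ 3 + c₄ * t ^ 4) (h : IsLocalMin g 0) :
    c₁ = 0 ∧ 0 ≤ c₂ := by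
  have hpoly := (((hasDerivAt_id (0 : ℝ)).const_mul c₁).add
      (((hasDerivAt_pow 2 (0 : ℝ)).const_mul c₂).add (((hasDerivAt_pow 3 (0 : ℝ)).const_mul c₃).add
        ((hasDerivAt_pow 4 (0 : ℝ)).const_mul c₄)))).const_add c₀
  have hc₁ : c₁ = 0 := h.hasDerivAt_eq_zero <| (hpoly.congr_deriv (by simp)).congr_of_eventuallyEq
    (.of_forall fun t => by simp [hg]; ring)
  refine ⟨hc₁, ?_⟩
  have hquad : ∀ᶠ t in 𝓝[≠] 0, 0 ≤ c₂ + c₃ * t + c₄ * t ^ 2 := by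
    filter_upwards [h.filter_mono nhdsWithin_le_nhds, self_mem_nhdsWithin] with t ht ht0
    have ht2 : 0 < t ^ 2 := sq_pos_iff.mpr ht0
    rw [hg, hg, hc₁] at ht
    nlinarith
  have hlim : Tendsto (fun t : ℝ => c₂ + c₃ * t + c₄ * t ^ 2) (𝓝[≠] 0) (𝓝 c₂) := by
    apply tendsto_nhdsWithin_of_tendsto_nhds
    simpa using (by fun_prop : Continuous fun t : ℝ => c₂ + c₃ * t + c₄ * t ^ 2).tendsto 0
  exact ge_of_tendsto hlim hquad

lemma eq_of_isLocalMin_sq_mul_sub_sq {b x : ℝ} (hx : x ≠ 0)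
    (h : IsLocalMin (fun s : ℝ => s ^ 2 * (s - b) ^ 2) x) : x = b := by
  have hline (t : ℝ) : (x + t • 1) ^ 2 * (x + t • 1 - b) ^ 2 = x ^ 2 * (x - b) ^ 2
      + 2 * x * ((x - b) * (2 * x - b)) * t + (6 * x ^ 2 - 6 * b * x + b ^ 2) * t ^ 2
      + (4 * x - 2 * b) * t ^ 3 + 1 * t ^ 4 := by
    simp; ring
  obtain ⟨hc₁, hc₂⟩ := quartic_coeffs_of_isLocalMin hline (h.comp_add_smul 1)
  rcases mul_eq_zero.mp ((mul_eq_zero.mp hc₁).resolve_left (by positivity)) with h | h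
  · linarith
  -- the other critical point `b / 2` is a local maximum
  · nlinarith [sq_pos_iff.mpr hx]

def planarQuartic (b c K : ℝ) (p : ℝ × ℝ) : ℝ :=
  p.1 ^ 2 * (p.1 - b) ^ 2 + p.2 ^ 2 * (p.2 - c) ^ 2 + p.1 ^ 2 * p.2 ^ 2 + K * (p.1 ^ 2 + p.2 ^ 2)

lemma not_isLocalMin_planarQuartic {b c K x y : ℝ} (hK : 0 ≤ K) (hx : x ≠ 0) (hy : y ≠ 0) :
    ¬ IsLocalMin (planarQuartic b c K) (x, y) := by
  intro h
  have hline₁ (t : ℝ) : planarQuartic b c K ((x, y) + t • (1, 0)) = planarQuartic b c K (x, y)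
      + 2 * x * (2 * x ^ 2 - 3 * b * x + b ^ 2 + y ^ 2 + K) * t
      + (6 * x ^ 2 - 6 * b * x + b ^ 2 + y ^ 2 + K) * t ^ 2
      + (4 * x - 2 * b) * t ^ 3 + 1 * t ^ 4 := by
    simp [planarQuartic]; ring
  have hline₂ (t : ℝ) : planarQuartic b c K ((x, y) + t • (0, 1)) = planarQuartic b c K (x, y)
      + 2 * y * (2 * y ^ 2 - 3 * c * y + c ^ 2 + x ^ 2 + K) * t
      + (6 * y ^ 2 - 6 * c * y + c ^ 2 + x ^ 2 + K) * t ^ 2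
      + (4 * y - 2 * c) * t ^ 3 + 1 * t ^ 4 := by
    simp [planarQuartic]; ring
  have hrot (t : ℝ) : planarQuartic b c K ((x, y) + t • (y, -x)) = planarQuartic b c K (x, y)
      + 2 * x * y * ((b ^ 2 - c ^ 2) + 3 * (y * c - x * b) + (x ^ 2 - y ^ 2)) * t
      + (y ^ 2 * K + y ^ 2 * b ^ 2 + y ^ 4 - 6 * x * y ^ 2 * b + x ^ 2 * K + x ^ 2 * c ^ 2
          - 6 * x ^ 2 * y * c + 8 * x ^ 2 * y ^ 2 + x ^ 4) * t ^ 2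
      + (2 * x * y * (y ^ 2 - x ^ 2) + 2 * (x ^ 3 * c - y ^ 3 * b)) * t ^ 3
      + (x ^ 4 + x ^ 2 * y ^ 2 + y ^ 4) * t ^ 4 := by
    simp [planarQuartic]; ring
  have E₁ : 2 * x ^ 2 - 3 * b * x + b ^ 2 + y ^ 2 + K = 0 :=
    (mul_eq_zero.mp (quartic_coeffs_of_isLocalMin hline₁ (h.comp_add_smul _)).1).resolve_left
      (by positivity)
  have E₂ : 2 * y ^ 2 - 3 * c * y + c ^ 2 + x ^ 2 + K = 0 :=
    (mul_eq_zero.mp (quartic_coeffs_of_isLocalMin hline₂ (h.comp_add_smul _)).1).resolve_left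
      (by positivity)
  have hc₂ := (quartic_coeffs_of_isLocalMin hrot (h.comp_add_smul _)).2
  -- the first-order conditions `E₁`, `E₂` make the rotation's quadratic coefficient negative
  have hc₂_eq : y ^ 2 * K + y ^ 2 * b ^ 2 + y ^ 4 - 6 * x * y ^ 2 * b + x ^ 2 * K + x ^ 2 * c ^ 2
      - 6 * x ^ 2 * y * c + 8 * x ^ 2 * y ^ 2 + x ^ 4
      = -(2 * x ^ 2 * y ^ 2 + 3 * y ^ 2 * ((b - x) ^ 2 + y ^ 2 + K)
        + 3 * x ^ 2 * ((c - y) ^ 2 + x ^ 2 + K)) := by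
    linear_combination 4 * y ^ 2 * E₁ + 4 * x ^ 2 * E₂
  rw [hc₂_eq] at hc₂
  have : 0 < 2 * x ^ 2 * y ^ 2 + 3 * y ^ 2 * ((b - x) ^ 2 + y ^ 2 + K)
      + 3 * x ^ 2 * ((c - y) ^ 2 + x ^ 2 + K) := by positivity
  linarith

section Objective

variable {ι : Type*} [Fintype ι]

/-- The pair sum `∑_{i<j} x_i² x_j²` is written as `((∑ x_i²)² - ∑ x_i⁴) / 2`, so that no order
on `ι` is needed. -/
noncomputable def quarticObjective (a x : ι → ℝ) : ℝ :=
  ∑ i, x i ^ 2 * (x i - a i) ^ 2 + ((∑ i, x i ^ 2) ^ 2 - ∑ i, x i ^ 4) / 2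

lemma sum_add_pow_of_mul_eq_zero {u v : ι → ℝ} (huv : ∀ i, u i * v i = 0) {m : ℕ} (hm : m ≠ 0) :
    ∑ i, (u i + v i) ^ m = ∑ i, u i ^ m + ∑ i, v i ^ m := by
  rw [← sum_add_distrib]
  refine sum_congr rfl fun i _ => ?_
  rcases mul_eq_zero.mp (huv i) with h | h <;> simp [h, hm]

lemma quarticObjective_add {a u v : ι → ℝ} (huv : ∀ i, u i * v i = 0) :
    quarticObjective a (u + v) =
      quarticObjective a u + quarticObjective a v + (∑ i, u i ^ 2) * ∑ i, v i ^ 2 := by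
  have hsep : ∑ i, (u i + v i) ^ 2 * (u i + v i - a i) ^ 2 =
      ∑ i, u i ^ 2 * (u i - a i) ^ 2 + ∑ i, v i ^ 2 * (v i - a i) ^ 2 := by
    rw [← sum_add_distrib]
    refine sum_congr rfl fun i _ => ?_
    rcases mul_eq_zero.mp (huv i) with h | h <;> simp [h]
  simp only [quarticObjective, Pi.add_apply, hsep, sum_add_pow_of_mul_eq_zero huv two_ne_zero,
    sum_add_pow_of_mul_eq_zero huv four_ne_zero]
  ring

variable [DecidableEq ι]

lemma sum_single_pow (k : ι) (s : ℝ) {m : ℕ} (hm : m ≠ 0) : ∑ i, Pi.single k s i ^ m = s ^ m := by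
  simp [Pi.single_apply, ite_pow, hm]

lemma quarticObjective_single (a : ι → ℝ) (k : ι) (s : ℝ) :
    quarticObjective a (Pi.single k s) = s ^ 2 * (s - a k) ^ 2 := by
  simp [quarticObjective, Pi.single_apply, ite_pow]
  ring

lemma quarticObjective_add_single_add_single {a w : ι → ℝ} {k l : ι} (hkl : k ≠ l) (hwk : w k = 0)
    (hwl : w l = 0) (x y : ℝ) :
    quarticObjective a (w + Pi.single k x + Pi.single l y) =
      quarticObjective a w + planarQuartic (a k) (a l) (∑ i, w i ^ 2) (x, y) := by
  have hkl' : ∀ i, (Pi.single k x : ι → ℝ) i * (Pi.single l y : ι → ℝ) i = 0 := by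
    intro i; rcases eq_or_ne i k with rfl | hik <;> simp [*]
  have hw : ∀ i, w i * (Pi.single k x + Pi.single l y : ι → ℝ) i = 0 := by
    intro i; rcases eq_or_ne i k with rfl | hik <;> rcases eq_or_ne i l with rfl | hil <;> simp [*]
  rw [add_assoc, quarticObjective_add hw, quarticObjective_add hkl', quarticObjective_single,
    quarticObjective_single]
  simp only [Pi.add_apply, sum_add_pow_of_mul_eq_zero hkl' two_ne_zero,
    sum_single_pow _ _ two_ne_zero, planarQuartic]
  ring

lemma apply_eq_zero_or_of_isLocalMin_quarticObjective {a z : ι → ℝ}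
    (hz : IsLocalMin (quarticObjective a) z) {k l : ι} (hkl : k ≠ l) : z k = 0 ∨ z l = 0 := by
  by_contra! ⟨hk, hl⟩
  set w := z - Pi.single k (z k) - Pi.single l (z l)
  have hwk : w k = 0 := by simp [w, hkl]
  have hwl : w l = 0 := by simp [w, hkl.symm]
  have hzw : w + Pi.single k (z k) + Pi.single l (z l) = z := by simp only [w]; abel
  rw [← hzw] at hz
  have hplane := hz.comp_continuous (g := fun p : ℝ × ℝ => w + Pi.single k p.1 + Pi.single l p.2)
    (b := (z k, z l))
    ((continuous_const.add ((continuous_single k).comp continuous_fst)).add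
      ((continuous_single l).comp continuous_snd)).continuousAt
  refine not_isLocalMin_planarQuartic (b := a k) (c := a l) (K := ∑ i, w i ^ 2)
    (sum_nonneg fun i _ => sq_nonneg (w i)) hk hl (hplane.mono fun p hp => ?_)
  simpa [quarticObjective_add_single_add_single hkl hwk hwl] using hp

lemma eq_of_isLocalMin_quarticObjective_single {a : ι → ℝ} {k : ι} {s : ℝ}
    (hz : IsLocalMin (quarticObjective a) (Pi.single k s)) (hs : s ≠ 0) : s = a k := by
  refine eq_of_isLocalMin_sq_mul_sub_sq hs ?_
  have := hz.comp_continuous (g := fun t : ℝ => (Pi.single k t : ι → ℝ)) (b := s)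
    (continuous_single k).continuousAt
  simpa [Function.comp_def, quarticObjective_single] using this

end Objective

theorem stmt_3_general (n : ℕ) (a : Fin n → ℝ)
    (f : (Fin n → ℝ) → ℝ)
    (hf : ∀ x, f x = ∑ i, (x i) ^ 2 * (x i - a i) ^ 2
        + ∑ i, ∑ j ∈ Finset.Ioi i, (x i) ^ 2 * (x j) ^ 2) :
    ∀ z, IsLocalMin f z → f z = 0 ∧ (z = 0 ∨ ∃ i, z = Pi.single i (a i)) := by
  intro z hz
  obtain rfl : f = quarticObjective a := funext fun x => by
    have hpairs := two_mul_sum_sum_Ioi_mul fun i => x i ^ 2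
    simp only [← pow_mul] at hpairs
    rw [hf, quarticObjective]
    linarith
  rcases eq_or_ne z 0 with rfl | hz0
  · exact ⟨by simp [quarticObjective], Or.inl rfl⟩
  obtain ⟨k, hk⟩ : ∃ k, z k ≠ 0 := by
    contrapose! hz0
    exact funext hz0
  have hsingle : z = Pi.single k (z k) := by
    funext l
    rcases eq_or_ne l k with rfl | hlk
    · simp
    · simp [hlk, (apply_eq_zero_or_of_isLocalMin_quarticObjective hz hlk.symm).resolve_left hk]
  rw [hsingle] at hz ⊢
  rw [eq_of_isLocalMin_quarticObjective_single hz hk]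
  exact ⟨by simp [quarticObjective_single], Or.inr ⟨k, rfl⟩⟩

theorem stmt_3 (n : ℕ) (a : Fin n → ℝ) (ha : ∀ i, a i ≠ 0)
    (f : (Fin n → ℝ) → ℝ)
    (hf : ∀ x, f x = ∑ i, (x i) ^ 2 * (x i - a i) ^ 2
        + ∑ i, ∑ j ∈ Finset.Ioi i, (x i) ^ 2 * (x j) ^ 2) :
    ∀ z, IsLocalMin f z → f z = 0 ∧ (z = 0 ∨ ∃ i, z = Pi.single i (a i)) :=
  stmt_3_general n a f hf
end

section
/- Let a ≠ 0 be a real number and s ≥ 0 with δ := a^2 − 8s ≥ 0. Suppose z is a real number satisfying 2z^2 − 3az + (s + a^2) = 0 and 2z(4z − 3a) ≥ 0. Then |z| ≥ (3/4)|a|. -/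
theorem stmt_7 (a s z : ℝ) (ha : a ≠ 0) (hs : 0 ≤ s) (hδ : 0 ≤ a ^ 2 - 8 * s)
    (h1 : 2 * z ^ 2 - 3 * a * z + (s + a ^ 2) = 0)
    (h2 : 0 ≤ 2 * z * (4 * z - 3 * a)) :
    (3 / 4) * |a| ≤ |z| := by
  have key : 9 / 16 * a ^ 2 ≤ z ^ 2 := by
    nlinarith [sq_nonneg (4 * z - 3 * a), sq_nonneg z, sq_nonneg a, sq_nonneg (4 * z - a), sq_nonneg (2 * z - a), sq_nonneg (2 * z - 3 * a)]
  have ha' : 0 < |a| := abs_pos.mpr ha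
  nlinarith [abs_nonneg z, sq_abs z, sq_abs a, ha']
end

section
/- Let u_1, ..., u_k ∈ ℝ^n with k ≤ n+1, rank U = k−1 where U = [u_1 − u_k, ..., u_{k−1} − u_k], and let f(x) = F_{k−1}(U†(x − u_k)) with U† = (UᵀU)^{−1}Uᵀ. Then every local minimizer of f is a global minimizer of f (i.e., a zero of f). -/
/-!
Along the coordinate line through `w` in direction `eᵢ`, the simplicial loss is
`t²(t-1)² + Aᵢ t² + const` with `Aᵢ = ∑_{j ≠ i} wⱼ²`. At a local minimum each nonzero coordinate
is a root of `2t² - 3t + 1 + Aᵢ`, which forces `wᵢ ≥ 1/2` and `Aᵢ ≤ 1/8`; two nonzero coordinates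
would give `Aᵢ ≥ 1/4`. So at most one coordinate is nonzero, and it is a local minimum of
`t²(t-1)²`, hence `1`; then the loss vanishes. Local minima of `f` are carried to local minima of
the loss because `U†U = 1` makes `v ↦ z + U(v - U†(z - u_k))` a continuous section of
`x ↦ U†(x - u_k)` through `z`.
-/

open Finset Function Matrix

lemma sq_sum_eq_sum_sq_add_two_mul_sum_Ioi {α R : Type*} [CommSemiring R] [LinearOrder α]
    [Fintype α] [LocallyFiniteOrderTop α] [LocallyFiniteOrderBot α] (a : α → R) :
    (∑ i, a i) ^ 2 = ∑ i, a i ^ 2 + 2 * ∑ i, ∑ j ∈ Ioi i, a i * a j := by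
  classical
  have hoff := sum_sum_Ioi_add_eq_sum_sum_off_diag fun i j => a i * a j
  calc (∑ i, a i) ^ 2 = ∑ i, (a i * a i + ∑ j ∈ {i}ᶜ, a j * a i) := by
        rw [sq, sum_mul_sum, sum_comm]
        exact sum_congr rfl fun i _ => Fintype.sum_eq_add_sum_compl i _
    _ = ∑ i, a i ^ 2 + 2 * ∑ i, ∑ j ∈ Ioi i, a i * a j := by
        simp only [sum_add_distrib, ← hoff, ← sq, mul_sum, two_mul]
        ring_nf

lemma Matrix.isUnit_of_rank_eq_card {n K : Type*} [Fintype n] [DecidableEq n] [Field K]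
    {A : Matrix n n K} (h : A.rank = Fintype.card n) : IsUnit A := by
  refine Matrix.mulVec_surjective_iff_isUnit.mp fun v => ?_
  have : LinearMap.range A.mulVecLin = ⊤ :=
    Submodule.eq_top_of_finrank_eq (by rwa [Module.finrank_fintype_fun_eq_card])
  exact LinearMap.range_eq_top.mp this v

lemma Matrix.inv_transpose_mul_self_mul_transpose_mul_self {m n K : Type*} [Fintype m]
    [Fintype n] [DecidableEq n] [Field K] [LinearOrder K] [IsStrictOrderedRing K]
    {A : Matrix m n K} (h : A.rank = Fintype.card n) : (Aᵀ * A)⁻¹ * Aᵀ * A = 1 := by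
  have hunit : IsUnit (Aᵀ * A) := isUnit_of_rank_eq_card (by rwa [rank_transpose_mul_self])
  rw [Matrix.mul_assoc, nonsing_inv_mul _ ((isUnit_iff_isUnit_det _).mp hunit)]

lemma IsLocalMin.comp_update {ι β : Type*} {π : ι → Type*} [DecidableEq ι]
    [∀ i, TopologicalSpace (π i)] [Preorder β] {F : (∀ i, π i) → β} {w : ∀ i, π i}
    (h : IsLocalMin F w) (i : ι) : IsLocalMin (fun t => F (update w i t)) (w i) := by
  have hcont : ContinuousAt (fun t => update w i t) (w i) :=
    (continuous_const.update i continuous_id).continuousAt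
  exact (update_eq_self i w ▸ h).comp_continuous hcont

lemma IsLocalMin.of_comp_of_rightInverse {X Y β : Type*} [TopologicalSpace X]
    [TopologicalSpace Y] [Preorder β] {F : Y → β} {φ : X → Y} {ψ : Y → X} {x : X}
    (h : IsLocalMin (F ∘ φ) x) (hφψ : RightInverse ψ φ) (hψ : ψ (φ x) = x)
    (hψc : ContinuousAt ψ (φ x)) : IsLocalMin F (φ x) := by
  have := (hψ.symm ▸ h : IsLocalMin (F ∘ φ) (ψ (φ x))).comp_continuous hψc
  rwa [comp_assoc, hφψ.comp_eq_id, comp_id] at this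

lemma IsLocalMin.of_comp_mulVec_sub {ι κ R β : Type*} [Fintype ι] [DecidableEq ι] [Fintype κ]
    [Ring R] [TopologicalSpace R] [IsTopologicalRing R] [Preorder β] {F : (ι → R) → β}
    {A : Matrix ι κ R} {B : Matrix κ ι R} (hAB : A * B = 1) {c z : κ → R}
    (h : IsLocalMin (fun x => F (A *ᵥ (x - c))) z) : IsLocalMin F (A *ᵥ (z - c)) := by
  refine h.of_comp_of_rightInverse (ψ := fun v => z + B *ᵥ (v - A *ᵥ (z - c))) (fun v => ?_)
    (by simp) (by fun_prop)
  dsimp only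
  rw [add_sub_right_comm, mulVec_add, mulVec_mulVec, hAB, one_mulVec, add_sub_cancel]

lemma Fintype.sum_comp_update {ι α M : Type*} [Fintype ι] [DecidableEq ι] [AddCommMonoid M]
    (g : α → M) (w : ι → α) (i : ι) (s : α) :
    ∑ j, g (update w i s j) = g s + ∑ j ∈ {i}ᶜ, g (w j) := by
  rw [Fintype.sum_eq_add_sum_compl i, update_self]
  congr 1
  refine Finset.sum_congr rfl fun j hj => ?_
  rw [update_of_ne (by simpa using hj)]

def simplexLoss {m : ℕ} (z : Fin m → ℝ) : ℝ :=
  ∑ i, z i ^ 2 * (z i - 1) ^ 2 + ∑ i, ∑ j ∈ Ioi i, z i ^ 2 * z j ^ 2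

def simplexLossLine (A C t : ℝ) : ℝ := t ^ 2 * (t - 1) ^ 2 + A * t ^ 2 + C

section simplexLoss

variable {m : ℕ}

lemma simplexLoss_nonneg (z : Fin m → ℝ) : 0 ≤ simplexLoss z := by
  unfold simplexLoss; positivity

@[simp]
lemma simplexLoss_zero : simplexLoss (0 : Fin m → ℝ) = 0 := by
  simp [simplexLoss]

lemma simplexLoss_update (w : Fin m → ℝ) (i : Fin m) (t : ℝ) :
    simplexLoss (update w i t) =
      simplexLossLine (∑ j ∈ {i}ᶜ, w j ^ 2) (simplexLoss (update w i 0)) t := by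
  have hpair (s : ℝ) := sq_sum_eq_sum_sq_add_two_mul_sum_Ioi fun j => update w i s j ^ 2
  simp only [Fintype.sum_comp_update (· ^ 2), Fintype.sum_comp_update (fun x : ℝ => (x ^ 2) ^ 2)]
    at hpair
  simp only [simplexLoss, simplexLossLine,
    Fintype.sum_comp_update (fun x : ℝ => x ^ 2 * (x - 1) ^ 2)]
  linear_combination (hpair 0 - hpair t) / 2

lemma IsLocalMin.simplexLossLine_critical {A C t : ℝ} (h : IsLocalMin (simplexLossLine A C) t) :
    t * (2 * t ^ 2 - 3 * t + 1 + A) = 0 := by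
  have hderiv := ((((hasDerivAt_id' t).fun_pow 2).fun_mul
    (((hasDerivAt_id' t).sub_const 1).fun_pow 2)).fun_add
    (((hasDerivAt_id' t).fun_pow 2).const_mul A)).add_const C
  linear_combination h.hasDerivAt_eq_zero hderiv / 2

lemma IsLocalMin.eq_zero_or_eq_one_of_simplexLossLine {C t : ℝ}
    (h : IsLocalMin (simplexLossLine 0 C) t) : t = 0 ∨ t = 1 := by
  have hcrit : t * (2 * t - 1) * (t - 1) = 0 := by
    linear_combination h.simplexLossLine_critical
  rcases mul_eq_zero.mp hcrit with h0 | h1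
  · rcases mul_eq_zero.mp h0 with h0 | hhalf
    · exact .inl h0
    · obtain rfl : t = 1 / 2 := by linarith
      -- `1/2` is a local maximum: `t²(t-1)² = (t(1-t))² < 1/16` on `(1/2, 1)`.
      obtain ⟨s, hs, hs_gt, hs_lt⟩ := ((h.filter_mono nhdsWithin_le_nhds).and
        (Ioo_mem_nhdsGT (show (1 / 2 : ℝ) < 1 by norm_num))).exists
      simp only [simplexLossLine] at hs
      nlinarith [mul_pos (sub_pos.mpr hs_gt) (sub_pos.mpr hs_lt),
        mul_pos (sub_pos.mpr hs_gt) (sub_pos.mpr hs_gt)]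
  · exact .inr (by linarith)

theorem simplexLoss_eq_zero_of_isLocalMin {w : Fin m → ℝ} (hw : IsLocalMin simplexLoss w) :
    simplexLoss w = 0 := by
  set A : Fin m → ℝ := fun i => ∑ j ∈ {i}ᶜ, w j ^ 2
  have hline (i : Fin m) :
      IsLocalMin (simplexLossLine (A i) (simplexLoss (update w i 0))) (w i) := by
    have h := hw.comp_update i
    rwa [funext (simplexLoss_update w i)] at h
  have hsupp (i : Fin m) (hi : w i ≠ 0) : 1 / 2 ≤ w i ∧ A i ≤ 1 / 8 := by
    have hq : 2 * w i ^ 2 - 3 * w i + 1 + A i = 0 :=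
      (mul_eq_zero.mp (hline i).simplexLossLine_critical).resolve_left hi
    have hA : 0 ≤ A i := sum_nonneg fun j _ => sq_nonneg (w j)
    constructor <;> nlinarith [sq_nonneg (w i - 3 / 4)]
  have hunique (i j : Fin m) (hi : w i ≠ 0) (hj : w j ≠ 0) : j = i := by
    by_contra hji
    have : w j ^ 2 ≤ A i := single_le_sum (fun l _ => sq_nonneg (w l)) (by simpa using hji)
    nlinarith [hsupp i hi, hsupp j hj]
  by_cases hzero : w = 0
  · rw [hzero, simplexLoss_zero]
  obtain ⟨i, hi⟩ := Function.ne_iff.mp hzero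
  have hoff (j : Fin m) (hj : j ≠ i) : w j = 0 := by
    by_contra h
    exact hj (hunique i j hi h)
  have hAi : A i = 0 := sum_eq_zero fun j hj => by rw [hoff j (by simpa using hj)]; ring
  have hrest : update w i 0 = 0 := by
    ext j
    rcases eq_or_ne j i with rfl | hj
    · simp
    · simp [hj, hoff j hj]
  have hwi : w i = 1 := (hAi ▸ hline i).eq_zero_or_eq_one_of_simplexLossLine.resolve_left hi
  calc simplexLoss w = simplexLoss (update w i (w i)) := by rw [update_eq_self]
    _ = simplexLossLine (A i) (simplexLoss (update w i 0)) (w i) := simplexLoss_update w i (w i)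
    _ = 0 := by rw [hAi, hrest, hwi, simplexLoss_zero]; norm_num [simplexLossLine]

end simplexLoss

theorem stmt_12_general (n m : ℕ) (u : Fin (m + 1) → (Fin n → ℝ))
    (U : Matrix (Fin n) (Fin m) ℝ)
    (hrank : U.rank = m)
    (Udag : Matrix (Fin m) (Fin n) ℝ) (hUdag : Udag = (U.transpose * U)⁻¹ * U.transpose)
    (F : (Fin m → ℝ) → ℝ)
    (hF : ∀ z, F z = ∑ i, (z i) ^ 2 * (z i - 1) ^ 2
        + ∑ i, ∑ j ∈ Finset.Ioi i, (z i) ^ 2 * (z j) ^ 2)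
    (f : (Fin n → ℝ) → ℝ)
    (hf : ∀ x, f x = F (Udag.mulVec (x - u (Fin.last m)))) :
    ∀ z, IsLocalMin f z → f z = 0 ∧ ∀ x, f z ≤ f x := by
  intro z hz
  obtain rfl : F = simplexLoss := funext hF
  obtain rfl : f = fun x => simplexLoss (Udag *ᵥ (x - u (Fin.last m))) := funext hf
  have hleft : Udag * U = 1 := by
    rw [hUdag]
    exact inv_transpose_mul_self_mul_transpose_mul_self (by rwa [Fintype.card_fin])
  have hfz : simplexLoss (Udag *ᵥ (z - u (Fin.last m))) = 0 :=
    simplexLoss_eq_zero_of_isLocalMin (hz.of_comp_mulVec_sub hleft)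
  exact ⟨hfz, fun x => hfz.trans_le (simplexLoss_nonneg _)⟩

theorem stmt_12 (n m : ℕ) (hmn : m ≤ n) (u : Fin (m + 1) → (Fin n → ℝ))
    (U : Matrix (Fin n) (Fin m) ℝ)
    (hU : ∀ i j, U i j = u j.castSucc i - u (Fin.last m) i)
    (hrank : U.rank = m)
    (Udag : Matrix (Fin m) (Fin n) ℝ) (hUdag : Udag = (U.transpose * U)⁻¹ * U.transpose)
    (F : (Fin m → ℝ) → ℝ)
    (hF : ∀ z, F z = ∑ i, (z i) ^ 2 * (z i - 1) ^ 2
        + ∑ i, ∑ j ∈ Finset.Ioi i, (z i) ^ 2 * (z j) ^ 2)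
    (f : (Fin n → ℝ) → ℝ)
    (hf : ∀ x, f x = F (Udag.mulVec (x - u (Fin.last m)))) :
    ∀ z, IsLocalMin f z → f z = 0 ∧ ∀ x, f z ≤ f x :=
  stmt_12_general n m u U hrank Udag hUdag F hF f hf
end

section
/- Fix a ∈ ℝ^n with all a_i nonzero. Any real polynomial h in n variables that vanishes at all of the points 0, a_1 e_1, ..., a_n e_n belongs to the ideal generated by the polynomials x_i^2 − a_i x_i (1 ≤ i ≤ n) and x_i x_j (1 ≤ i < j ≤ n). -/
open MvPolynomial

theorem stmt_13 (n : ℕ) (a : Fin n → ℝ) (ha : ∀ i, a i ≠ 0)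
    (h : MvPolynomial (Fin n) ℝ)
    (h0 : eval (0 : Fin n → ℝ) h = 0)
    (hv : ∀ i, eval (Pi.single i (a i)) h = 0) :
    h ∈ Ideal.span ({p | (∃ i, p = X i ^ 2 - C (a i) * X i)
        ∨ (∃ i j, i < j ∧ p = X i * X j)} : Set (MvPolynomial (Fin n) ℝ)) := by
  set S : Set (MvPolynomial (Fin n) ℝ) := {p | (∃ i, p = X i ^ 2 - C (a i) * X i)
        ∨ (∃ i j, i < j ∧ p = X i * X j)} with hS
  set I := Ideal.span S with hI
  have memsq : ∀ i, (X i ^ 2 - C (a i) * X i : MvPolynomial (Fin n) ℝ) ∈ I := fun i =>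
    Ideal.subset_span (Or.inl ⟨i, rfl⟩)
  have memxx : ∀ i j : Fin n, i ≠ j → (X i * X j : MvPolynomial (Fin n) ℝ) ∈ I := by
    intro i j hij
    rcases lt_or_gt_of_ne hij with hlt | hgt
    · exact Ideal.subset_span (Or.inr ⟨i, j, hlt, rfl⟩)
    · rw [mul_comm]
      exact Ideal.subset_span (Or.inr ⟨j, i, hgt, rfl⟩)
  -- reduction
  have red : ∀ p : MvPolynomial (Fin n) ℝ, ∃ (c : ℝ) (d : Fin n → ℝ),
      p - (C c + ∑ i, C (d i) * X i) ∈ I := by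
    intro p
    induction p using MvPolynomial.induction_on with
    | C r =>
      exact ⟨r, 0, by simp⟩
    | add p q hp hq =>
      obtain ⟨cp, dp, hp⟩ := hp
      obtain ⟨cq, dq, hq⟩ := hq
      refine ⟨cp + cq, dp + dq, ?_⟩
      have := Ideal.add_mem I hp hq
      convert this using 1
      simp only [Pi.add_apply, map_add, Finset.sum_add_distrib, add_mul]
      ring
    | mul_X p j hp =>
      obtain ⟨c, d, hp⟩ := hp
      set d' : Fin n → ℝ := Pi.single j (c + d j * a j) with hd'
      refine ⟨0, d', ?_⟩
      have key : p * X j - (C (0:ℝ) + ∑ i, C (d' i) * X i)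
          = (p - (C c + ∑ i, C (d i) * X i)) * X j
            + (∑ i ∈ Finset.univ.erase j, C (d i) * (X i * X j))
            + C (d j) * (X j ^ 2 - C (a j) * X j) := by
        have h1 : (∑ i, C (d' i) * X i)
            = (C (c + d j * a j) * X j : MvPolynomial (Fin n) ℝ) := by
          rw [Finset.sum_eq_single j]
          · simp [hd']
          · intro b _ hb; simp [hd', Pi.single_apply, hb]
          · simp
        have h2 : (∑ i ∈ Finset.univ.erase j, C (d i) * (X i * X j))
            = (∑ i, C (d i) * X i) * X j - C (d j) * (X j * X j) := by
          rw [Finset.sum_mul, ← Finset.sum_erase_add _ _ (Finset.mem_univ j)]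
          simp only [mul_assoc]
          ring
        rw [h1, h2]
        simp only [map_add, map_mul, map_zero]
        ring
      rw [key]
      exact Ideal.add_mem I (Ideal.add_mem I (Ideal.mul_mem_right _ I hp)
        (Ideal.sum_mem I (fun i hi =>
          Ideal.mul_mem_left I _ (memxx i j (Finset.ne_of_mem_erase hi)))))
        (Ideal.mul_mem_left I _ (memsq j))
  -- eval vanishes on I at our points
  have evalzero : ∀ v : Fin n → ℝ, (∀ p ∈ S, eval v p = 0) →
      ∀ q ∈ I, eval v q = 0 := by
    intro v hv q hq
    have : I ≤ RingHom.ker (eval v) := Ideal.span_le.mpr (fun p hp => hv p hp)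
    exact this hq
  have hS0 : ∀ p ∈ S, eval (0 : Fin n → ℝ) p = 0 := by
    rintro p (⟨i, rfl⟩ | ⟨i, j, hij, rfl⟩) <;> simp
  have hSk : ∀ k, ∀ p ∈ S, eval (Pi.single k (a k)) p = 0 := by
    intro k p hp
    rcases hp with ⟨i, rfl⟩ | ⟨i, j, hij, rfl⟩
    · rcases eq_or_ne i k with rfl | hik
      · simp [Pi.single_apply]; ring
      · simp [Pi.single_apply, hik]
    · rcases eq_or_ne i k with rfl | hik
      · have : j ≠ i := hij.ne'
        simp [Pi.single_apply, this]
      · simp [Pi.single_apply, hik]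
  obtain ⟨c, d, hred⟩ := red h
  have e0 := evalzero _ hS0 _ hred
  have h0' : constantCoeff h = 0 := by simpa using h0
  simp [h0'] at e0
  have hc : c = 0 := by linarith [e0]
  have hd : ∀ i, d i = 0 := by
    intro i
    have ei := evalzero _ (hSk i) _ hred
    simp [hv i, hc, Finset.sum_eq_single i, Pi.single_apply] at ei
    rcases ei with ei | ei
    · exact ei
    · exact absurd ei (ha i)
  have : h - (C c + ∑ i, C (d i) * X i) = h := by
    simp [hc, hd]
  rwa [this] at hred
end

section
/- Define f : ℝ² → ℝ by f(x₁,x₂) = (x₂ + 5x₁ − 23)² + (x₁² − 9x₁ + 20)² + (x₁x₂ + 22x₁ − 100)². Then f(x) = 0 if and only if (x₁,x₂) ∈ {(5,−2), (4,3)}, yet f possesses a critical point z with ∇f(z) = 0 and f(z) > 0; in particular f is not globally convex and there exists a point where the gradient vanishes but f is positive. -/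
/-!
Write `f = A² + B² + C²` with `A = x₂ + 5x₁ - 23`, `B = x₁² - 9x₁ + 20 = (x₁ - 4)(x₁ - 5)` and
`C = x₁x₂ + 22x₁ - 100`. The zeros are read off from `A = B = 0`. For fixed `x₁ = t`, `f` is a
convex quadratic in `x₂`, so `∂₂f = 0` has the unique solution `x₂ = (23 + 95t - 22t²) / (1 + t²)`;
along this curve `∂₁f` changes sign on `[-113/50, -9/4]`, which gives a critical point
(the paper's spurious minimizer near `(-2.2588, -49.7911)`). There `x₁ < 4`, so `B² > 0` and
`f > 0`. Finally, the zero set of a nonnegative convex function is a sublevel set, hence convex,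
but `{(5, -2), (4, 3)}` is not.
-/

open Set ContinuousLinearMap

def sosLoss (x : ℝ × ℝ) : ℝ :=
  (x.2 + 5 * x.1 - 23) ^ 2 + (x.1 ^ 2 - 9 * x.1 + 20) ^ 2 + (x.1 * x.2 + 22 * x.1 - 100) ^ 2

namespace sosLoss

def partialFst (x : ℝ × ℝ) : ℝ :=
  10 * (x.2 + 5 * x.1 - 23) + 2 * (2 * x.1 - 9) * (x.1 ^ 2 - 9 * x.1 + 20)
    + 2 * (x.2 + 22) * (x.1 * x.2 + 22 * x.1 - 100)

def partialSnd (x : ℝ × ℝ) : ℝ :=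
  2 * (x.2 + 5 * x.1 - 23) + 2 * x.1 * (x.1 * x.2 + 22 * x.1 - 100)

theorem nonneg (x : ℝ × ℝ) : 0 ≤ sosLoss x := by
  unfold sosLoss; positivity

theorem eq_zero_iff (x : ℝ × ℝ) : sosLoss x = 0 ↔ x = (5, -2) ∨ x = (4, 3) := by
  obtain ⟨a, b⟩ := x
  simp only [sosLoss, Prod.mk.injEq]
  constructor
  · intro h
    have hlin : b + 5 * a - 23 = 0 := by
      nlinarith [sq_nonneg (b + 5 * a - 23), sq_nonneg (a ^ 2 - 9 * a + 20),
        sq_nonneg (a * b + 22 * a - 100)]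
    have hquad : (a - 5) * (a - 4) = 0 := by
      nlinarith [sq_nonneg (b + 5 * a - 23), sq_nonneg (a ^ 2 - 9 * a + 20),
        sq_nonneg (a * b + 22 * a - 100)]
    rcases mul_eq_zero.mp hquad with h5 | h4
    · left; constructor <;> linarith
    · right; constructor <;> linarith
  · rintro (⟨rfl, rfl⟩ | ⟨rfl, rfl⟩) <;> norm_num

theorem pos_of_fst_lt_four {x : ℝ × ℝ} (hx : x.1 < 4) : 0 < sosLoss x := by
  have hquad : 0 < x.1 ^ 2 - 9 * x.1 + 20 := by nlinarith
  unfold sosLoss; positivity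

theorem hasFDerivAt (x : ℝ × ℝ) :
    HasFDerivAt sosLoss (partialFst x • fst ℝ ℝ ℝ + partialSnd x • snd ℝ ℝ ℝ) x := by
  have h₁ : HasFDerivAt (fun y : ℝ × ℝ => y.1) (fst ℝ ℝ ℝ) x := hasFDerivAt_fst
  have h₂ : HasFDerivAt (fun y : ℝ × ℝ => y.2) (snd ℝ ℝ ℝ) x := hasFDerivAt_snd
  have hlin := (h₂.add (h₁.const_mul 5)).sub_const 23
  have hquad := ((h₁.pow 2).sub (h₁.const_mul 9)).add_const 20
  have hbil := ((h₁.mul h₂).add (h₁.const_mul 22)).sub_const 100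
  refine (((hlin.pow 2).add (hquad.pow 2)).add (hbil.pow 2)).congr_fderiv ?_
  ext <;> simp [partialFst, partialSnd] <;> ring

theorem fderiv_eq_zero_iff (x : ℝ × ℝ) :
    fderiv ℝ sosLoss x = 0 ↔ partialFst x = 0 ∧ partialSnd x = 0 := by
  rw [(hasFDerivAt x).fderiv]
  constructor
  · intro h
    exact ⟨by simpa using congr($h (1, 0)), by simpa using congr($h (0, 1))⟩
  · rintro ⟨h₁, h₂⟩
    simp [h₁, h₂]

noncomputable def criticalSnd (t : ℝ) : ℝ := (23 + 95 * t - 22 * t ^ 2) / (1 + t ^ 2)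

theorem partialSnd_criticalSnd (t : ℝ) : partialSnd (t, criticalSnd t) = 0 := by
  unfold partialSnd criticalSnd
  field_simp
  ring

theorem continuous_criticalSnd : Continuous criticalSnd :=
  Continuous.div (by fun_prop) (by fun_prop) fun t => by positivity

theorem exists_partialFst_criticalSnd_eq_zero :
    ∃ t ∈ Icc (-113 / 50 : ℝ) (-9 / 4), partialFst (t, criticalSnd t) = 0 := by
  have hcont : Continuous fun t => partialFst (t, criticalSnd t) := by
    have hsnd := continuous_criticalSnd
    unfold partialFst
    fun_prop
  have hleft : partialFst (-113 / 50, criticalSnd (-113 / 50)) < 0 := by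
    norm_num [partialFst, criticalSnd]
  have hright : 0 < partialFst (-9 / 4, criticalSnd (-9 / 4)) := by
    norm_num [partialFst, criticalSnd]
  exact intermediate_value_Icc (by norm_num) hcont.continuousOn ⟨hleft.le, hright.le⟩

theorem not_convexOn_univ : ¬ ConvexOn ℝ univ sosLoss := by
  intro hconvex
  have hmid : sosLoss ((1 / 2 : ℝ) • ((5 : ℝ), (-2 : ℝ)) + (1 / 2 : ℝ) • ((4 : ℝ), (3 : ℝ))) ≤ 0 :=
    (hconvex.convex_le 0 ⟨trivial, ((eq_zero_iff _).2 (.inl rfl)).le⟩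
      ⟨trivial, ((eq_zero_iff _).2 (.inr rfl)).le⟩ (by norm_num) (by norm_num) (by norm_num)).2
  have hmid_mem := (eq_zero_iff _).1 (le_antisymm hmid (nonneg _))
  norm_num at hmid_mem

end sosLoss

theorem stmt_19 (f : ℝ × ℝ → ℝ)
    (hf : ∀ x : ℝ × ℝ, f x = (x.2 + 5 * x.1 - 23) ^ 2
        + (x.1 ^ 2 - 9 * x.1 + 20) ^ 2 + (x.1 * x.2 + 22 * x.1 - 100) ^ 2) :
    (∀ x : ℝ × ℝ, f x = 0 ↔ x = (5, -2) ∨ x = (4, 3))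
    ∧ (∃ z : ℝ × ℝ, fderiv ℝ f z = 0 ∧ 0 < f z)
    ∧ ¬ ConvexOn ℝ Set.univ f := by
  obtain rfl : f = sosLoss := funext hf
  obtain ⟨t, ht, hcrit⟩ := sosLoss.exists_partialFst_criticalSnd_eq_zero
  refine ⟨sosLoss.eq_zero_iff, ⟨(t, sosLoss.criticalSnd t), ?_, ?_⟩, sosLoss.not_convexOn_univ⟩
  · exact (sosLoss.fderiv_eq_zero_iff _).2 ⟨hcrit, sosLoss.partialSnd_criticalSnd t⟩
  · exact sosLoss.pos_of_fst_lt_four (by linarith [ht.2])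
end
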